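/- Let d ≥ 1, μ ∈ ℝ^d, σ > 0, ε ≥ 0 and θ₁, θ₂ ∈ ℝ^d with θ₁ ≠ 0 and θ₂ ≠ 0. If (⟨θ₁, μ⟩ − ε‖θ₁‖₁)/‖θ₁‖₂ ≥ (⟨θ₂, μ⟩ − ε‖θ₂‖₁)/‖θ₂‖₂, then PE^{∞,ε}(θ₁) ≤ PE^{∞,ε}(θ₂), where PE^{∞,ε}(θ) = ½·N(μ, σ²I_d)({x : ∃δ, ‖δ‖_∞ ≤ ε and ⟨θ, x+δ⟩ ≤ 0}) + ½·N(−μ, σ²I_d)({x : ∃δ, ‖δ‖_∞ ≤ ε and ⟨θ, x+δ⟩ ≥ 0}) is the ℓ∞-robust classification error with radius ε of the linear classifier f_θ(x) = sign(⟨θ,x⟩). -/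

import Mathlib

open MeasureTheory ProbabilityTheory
open scoped RealInnerProductSpace NNReal

/-- The multivariate Gaussian measure `N(m, v·I_d)` on `ℝ^d = EuclideanSpace ℝ (Fin d)`. -/
noncomputable def gaussN (d : ℕ) (m : EuclideanSpace ℝ (Fin d)) (v : ℝ≥0) :
    Measure (EuclideanSpace ℝ (Fin d)) :=
  (Measure.pi fun i => gaussianReal (m i) v).map
    (MeasurableEquiv.toLp 2 (Fin d → ℝ))

/-- The `ℓ¹` norm `‖x‖₁ = Σᵢ |xᵢ|` on `ℝ^d`. -/
noncomputable def l1norm {d : ℕ} (x : EuclideanSpace ℝ (Fin d)) : ℝ := ∑ i, |x i|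

/-- The `ℓ∞` norm `‖x‖_∞ = maxᵢ |xᵢ|` on `ℝ^d`. -/
noncomputable def linfnorm {d : ℕ} (x : EuclideanSpace ℝ (Fin d)) : ℝ := ⨆ i, |x i|

/-! An `ℓ∞` perturbation of size `ε` moves `⟪θ, x⟫` by at most `ε‖θ‖₁` (Hölder), with equality
for `δ = -ε · sign θ`, so both robust error events are half-spaces `{⟪±θ, x⟫ ≤ ε‖θ‖₁}`.
Comparing characteristic functions, `⟪θ, x⟫` has law `N(⟪θ, m⟫, σ²‖θ‖²)` under `N(m, σ²I)`;
after standardising, each half of `PE θ` equals `P(Z ≤ -(⟪θ, μ⟫ - ε‖θ‖₁)/‖θ‖)` for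
`Z ∼ N(0, σ²)`, which is antitone in the margin `(⟪θ, μ⟫ - ε‖θ‖₁)/‖θ‖`. -/

section

variable {d : ℕ}

instance isProbabilityMeasure_gaussN (m : EuclideanSpace ℝ (Fin d)) (v : ℝ≥0) :
    IsProbabilityMeasure (gaussN d m v) :=
  Measure.isProbabilityMeasure_map (MeasurableEquiv.measurable _).aemeasurable

open Complex in
lemma charFun_gaussN (m t : EuclideanSpace ℝ (Fin d)) (v : ℝ≥0) :
    charFun (gaussN d m v) t = exp (⟪t, m⟫ * I - v * ‖t‖ ^ 2 / 2) := by
  rw [gaussN, MeasurableEquiv.coe_toLp, charFun_pi]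
  simp_rw [charFun_gaussianReal, ← exp_sum]
  rw [← ofReal_pow, EuclideanSpace.real_norm_sq_eq, PiLp.inner_apply]
  push_cast
  simp [Finset.sum_sub_distrib, Finset.mul_sum, Finset.sum_div, mul_comm]

lemma charFun_map_inner {E : Type*} [NormedAddCommGroup E] [InnerProductSpace ℝ E]
    [MeasurableSpace E] [OpensMeasurableSpace E] {μ : Measure E} (θ : E) (s : ℝ) :
    charFun (μ.map fun x => ⟪θ, x⟫) s = charFun μ (s • θ) := by
  rw [charFun_apply, charFun_apply, integral_map (by fun_prop) (by fun_prop)]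
  simp [real_inner_smul_right, real_inner_comm, mul_comm]

lemma gaussN_map_inner (m θ : EuclideanSpace ℝ (Fin d)) (v : ℝ≥0) :
    (gaussN d m v).map (fun x => ⟪θ, x⟫) =
      gaussianReal ⟪θ, m⟫ (NNReal.mk (‖θ‖ ^ 2) (sq_nonneg _) * v) := by
  refine Measure.ext_of_charFun (funext fun s => ?_)
  rw [charFun_map_inner, charFun_gaussN, charFun_gaussianReal]
  congr 1
  simp only [real_inner_smul_left, norm_smul, Real.norm_eq_abs, Complex.ofReal_mul, mul_pow,
    ← Complex.ofReal_pow, sq_abs]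
  push_cast
  ring

lemma gaussianReal_Iic_eq_standard (a : ℝ) {c : ℝ} (hc : 0 < c) (v : ℝ≥0) (r : ℝ) :
    gaussianReal a (NNReal.mk (c ^ 2) (sq_nonneg _) * v) (Set.Iic r) =
      gaussianReal 0 v (Set.Iic ((r - a) / c)) := by
  have h : gaussianReal a (NNReal.mk (c ^ 2) (sq_nonneg _) * v) =
      ((gaussianReal 0 v).map (c * ·)).map (· + a) := by
    rw [gaussianReal_map_const_mul, gaussianReal_map_add_const, mul_zero, zero_add]
  rw [h, Measure.map_apply (by fun_prop) measurableSet_Iic,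
    Measure.map_apply (by fun_prop) (measurableSet_Iic.preimage (by fun_prop))]
  congr 1
  ext y
  simp [le_div_iff₀ hc, mul_comm, le_sub_iff_add_le]

lemma gaussN_inner_le (m : EuclideanSpace ℝ (Fin d)) (v : ℝ≥0) {θ : EuclideanSpace ℝ (Fin d)}
    (hθ : θ ≠ 0) (r : ℝ) :
    gaussN d m v {x | ⟪θ, x⟫ ≤ r} = gaussianReal 0 v (Set.Iic ((r - ⟪θ, m⟫) / ‖θ‖)) := by
  rw [← gaussianReal_Iic_eq_standard _ (norm_pos_iff.mpr hθ), ← gaussN_map_inner,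
    Measure.map_apply (by fun_prop) measurableSet_Iic]
  rfl

lemma inner_eq_sum_mul (x y : EuclideanSpace ℝ (Fin d)) : ⟪x, y⟫ = ∑ i, x i * y i := by
  simp [PiLp.inner_apply, mul_comm]

lemma abs_le_linfnorm (δ : EuclideanSpace ℝ (Fin d)) (i : Fin d) : |δ i| ≤ linfnorm δ :=
  le_ciSup (f := fun j => |δ j|) (Set.finite_range _).bddAbove i

lemma l1norm_nonneg (θ : EuclideanSpace ℝ (Fin d)) : 0 ≤ l1norm θ :=
  Finset.sum_nonneg fun _ _ => abs_nonneg _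

lemma l1norm_neg (θ : EuclideanSpace ℝ (Fin d)) : l1norm (-θ) = l1norm θ := by
  simp [l1norm]

lemma abs_inner_le_linfnorm_mul_l1norm (θ δ : EuclideanSpace ℝ (Fin d)) :
    |⟪θ, δ⟫| ≤ linfnorm δ * l1norm θ := by
  rw [inner_eq_sum_mul, l1norm, Finset.mul_sum]
  refine (Finset.abs_sum_le_sum_abs _ _).trans (Finset.sum_le_sum fun i _ => ?_)
  rw [abs_mul, mul_comm]
  exact mul_le_mul_of_nonneg_right (abs_le_linfnorm δ i) (abs_nonneg _)

lemma exists_linfnorm_le_inner_eq {ε : ℝ} (hε : 0 ≤ ε) (θ : EuclideanSpace ℝ (Fin d)) :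
    ∃ δ : EuclideanSpace ℝ (Fin d), linfnorm δ ≤ ε ∧ ⟪θ, δ⟫ = -(ε * l1norm θ) := by
  refine ⟨WithLp.toLp 2 fun i => if 0 ≤ θ i then -ε else ε, ?_, ?_⟩
  · refine Real.iSup_le (fun i => ?_) hε
    dsimp only
    split_ifs <;> simp [abs_of_nonneg hε]
  · rw [inner_eq_sum_mul, l1norm, Finset.mul_sum, ← Finset.sum_neg_distrib]
    refine Finset.sum_congr rfl fun i _ => ?_
    dsimp only
    split_ifs with h
    · simp [abs_of_nonneg h, mul_comm]
    · simp [abs_of_neg (not_le.mp h), mul_comm]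

lemma robust_set_eq {ε : ℝ} (hε : 0 ≤ ε) (θ : EuclideanSpace ℝ (Fin d)) :
    {x : EuclideanSpace ℝ (Fin d) | ∃ δ, linfnorm δ ≤ ε ∧ ⟪θ, x + δ⟫ ≤ 0} =
      {x | ⟪θ, x⟫ ≤ ε * l1norm θ} := by
  ext x
  simp only [Set.mem_ofPred_eq, inner_add_right]
  constructor
  · rintro ⟨δ, hδ, hx⟩
    have := neg_abs_le ⟪θ, δ⟫
    have := abs_inner_le_linfnorm_mul_l1norm θ δ
    have := mul_le_mul_of_nonneg_right hδ (l1norm_nonneg θ)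
    linarith
  · intro hx
    obtain ⟨δ, hδ, hθδ⟩ := exists_linfnorm_le_inner_eq hε θ
    exact ⟨δ, hδ, by linarith⟩

lemma robustError_eq {ε : ℝ} (hε : 0 ≤ ε) (μ : EuclideanSpace ℝ (Fin d)) (v : ℝ≥0)
    (θ : EuclideanSpace ℝ (Fin d)) (hθ : θ ≠ 0) :
    1 / 2 * (gaussN d μ v {x | ∃ δ, linfnorm δ ≤ ε ∧ ⟪θ, x + δ⟫ ≤ 0}).toReal
      + 1 / 2 * (gaussN d (-μ) v {x | ∃ δ, linfnorm δ ≤ ε ∧ 0 ≤ ⟪θ, x + δ⟫}).toReal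
      = (gaussianReal 0 v (Set.Iic (-((⟪θ, μ⟫ - ε * l1norm θ) / ‖θ‖)))).toReal := by
  have hneg : {x : EuclideanSpace ℝ (Fin d) | ∃ δ, linfnorm δ ≤ ε ∧ 0 ≤ ⟪θ, x + δ⟫} =
      {x | ⟪-θ, x⟫ ≤ ε * l1norm (-θ)} := by
    rw [← robust_set_eq hε]
    simp only [inner_neg_left, neg_nonpos]
  rw [robust_set_eq hε, hneg, gaussN_inner_le _ _ hθ, gaussN_inner_le _ _ (neg_ne_zero.2 hθ),
    l1norm_neg, inner_neg_neg, norm_neg, ← neg_div, neg_sub]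
  ring

end

theorem stmt12_general (d : ℕ) (μ : EuclideanSpace ℝ (Fin d)) (σ : ℝ)
    (ε : ℝ) (hε : 0 ≤ ε)
    (PE : EuclideanSpace ℝ (Fin d) → ℝ)
    (hPE : ∀ θ, PE θ =
      1 / 2 * (gaussN d μ ⟨σ ^ 2, sq_nonneg σ⟩
        {x | ∃ δ : EuclideanSpace ℝ (Fin d), linfnorm δ ≤ ε ∧ ⟪θ, x + δ⟫ ≤ 0}).toReal
      + 1 / 2 * (gaussN d (-μ) ⟨σ ^ 2, sq_nonneg σ⟩
          {x | ∃ δ : EuclideanSpace ℝ (Fin d), linfnorm δ ≤ ε ∧ 0 ≤ ⟪θ, x + δ⟫}).toReal)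
    (θ₁ θ₂ : EuclideanSpace ℝ (Fin d)) (hθ₁ : θ₁ ≠ 0) (hθ₂ : θ₂ ≠ 0)
    (h : (⟪θ₂, μ⟫ - ε * l1norm θ₂) / ‖θ₂‖ ≤ (⟪θ₁, μ⟫ - ε * l1norm θ₁) / ‖θ₁‖) :
    PE θ₁ ≤ PE θ₂ := by
  -- the statement's `⟨σ ^ 2, _⟩` elaborates at `{r // 0 ≤ r}`; naming it fixes its type to `ℝ≥0`
  set v : ℝ≥0 := ⟨σ ^ 2, sq_nonneg σ⟩
  rw [hPE, hPE, robustError_eq hε μ v θ₁ hθ₁, robustError_eq hε μ v θ₂ hθ₂]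
  exact ENNReal.toReal_mono (measure_ne_top _ _)
    (measure_mono (Set.Iic_subset_Iic.2 (neg_le_neg h)))

/-- The `ℓ∞`-robust classification error is monotone in the margin statistic
`(⟨θ,μ⟩ − ε‖θ‖₁)/‖θ‖₂`: if `θ₁` has a larger (or equal) statistic than `θ₂`, then
`PE^{∞,ε}(θ₁) ≤ PE^{∞,ε}(θ₂)`. -/
theorem stmt12 (d : ℕ) (hd : 1 ≤ d) (μ : EuclideanSpace ℝ (Fin d)) (σ : ℝ) (hσ : 0 < σ)
    (ε : ℝ) (hε : 0 ≤ ε)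
    (PE : EuclideanSpace ℝ (Fin d) → ℝ)
    (hPE : ∀ θ, PE θ =
      1 / 2 * (gaussN d μ ⟨σ ^ 2, sq_nonneg σ⟩
        {x | ∃ δ : EuclideanSpace ℝ (Fin d), linfnorm δ ≤ ε ∧ ⟪θ, x + δ⟫ ≤ 0}).toReal
      + 1 / 2 * (gaussN d (-μ) ⟨σ ^ 2, sq_nonneg σ⟩
          {x | ∃ δ : EuclideanSpace ℝ (Fin d), linfnorm δ ≤ ε ∧ 0 ≤ ⟪θ, x + δ⟫}).toReal)
    (θ₁ θ₂ : EuclideanSpace ℝ (Fin d)) (hθ₁ : θ₁ ≠ 0) (hθ₂ : θ₂ ≠ 0)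
    (h : (⟪θ₂, μ⟫ - ε * l1norm θ₂) / ‖θ₂‖ ≤ (⟪θ₁, μ⟫ - ε * l1norm θ₁) / ‖θ₁‖) :
    PE θ₁ ≤ PE θ₂ :=
  stmt12_general d μ σ ε hε PE hPE θ₁ θ₂ hθ₁ hθ₂ h
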